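/- arXiv:2203.02777 — 2 statements merged into one kernel-verified Lean document; each statement's English description precedes it below -/
import Mathlib

section
/- Let D be a data set with values b_l and let P_D(f) = (1/2)[χ²_0(D) - χ²_f(D)]. Under the hypotheses of Theorem 1 (student values q, ensemble values q̄, teacher values q̂, non-watermarked ensemble values q̃, q̄ = (1/N)q̂ + ((N-1)/N)q̃, L_se = ∑_l (q̄_l - q_l)²), the inequality P_D(f) ≥ (1/2)[χ²_0(D) - τ₂ - L_se] holds, where τ₂ = (1/N²)χ²_f(D̂) + ((N-1)/N)² χ²_f(D̃) + 2[(1/N)√(χ²_f(D̂)) + ((N-1)/N)√(χ²_f(D̃))]√(L_se) + (2(N-1)/N²)√(χ²_f(D̂) χ²_f(D̃)), i.e., χ²_f(D) ≤ (√(L_se) + (1/N)√(χ²_f(D̂)) + ((N-1)/N)√(χ²_f(D̃)))². -/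
noncomputable def chiF (L : ℕ) (p u : Fin L → ℝ) (f : ℝ) : ℝ :=
  sInf {e : ℝ | ∃ α β γ : ℝ,
    e = ∑ l, (u l - (α + β * Real.cos (f * p l + γ))) ^ 2}

noncomputable def chi0 (L : ℕ) (u : Fin L → ℝ) : ℝ :=
  sInf {e : ℝ | ∃ c : ℝ, e = ∑ l, (u l - c) ^ 2}

namespace Stmt16Aux

lemma setS_nonempty (L : ℕ) (p u : Fin L → ℝ) (f : ℝ) :
    {e : ℝ | ∃ α β γ : ℝ,
      e = ∑ l, (u l - (α + β * Real.cos (f * p l + γ))) ^ 2}.Nonempty :=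
  ⟨_, 0, 0, 0, rfl⟩

lemma setS_bdd (L : ℕ) (p u : Fin L → ℝ) (f : ℝ) :
    BddBelow {e : ℝ | ∃ α β γ : ℝ,
      e = ∑ l, (u l - (α + β * Real.cos (f * p l + γ))) ^ 2} := by
  refine ⟨0, fun e he => ?_⟩
  obtain ⟨α, β, γ, rfl⟩ := he
  positivity

lemma chiF_nonneg (L : ℕ) (p u : Fin L → ℝ) (f : ℝ) : 0 ≤ chiF L p u f :=
  le_csInf (setS_nonempty L p u f) (by rintro e ⟨α, β, γ, rfl⟩; positivity)

lemma chiF_le (L : ℕ) (p u : Fin L → ℝ) (f : ℝ) (α β γ : ℝ) :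
    chiF L p u f ≤ ∑ l, (u l - (α + β * Real.cos (f * p l + γ))) ^ 2 :=
  csInf_le (setS_bdd L p u f) ⟨α, β, γ, rfl⟩

lemma chiF_near (L : ℕ) (p u : Fin L → ℝ) (f : ℝ) {ε : ℝ} (hε : 0 < ε) :
    ∃ α β γ : ℝ, ∑ l, (u l - (α + β * Real.cos (f * p l + γ))) ^ 2
      < chiF L p u f + ε := by
  have h : chiF L p u f < chiF L p u f + ε := by linarith
  rw [chiF, csInf_lt_iff (setS_bdd L p u f) (setS_nonempty L p u f)] at h
  obtain ⟨b, ⟨α, β, γ, rfl⟩, hb⟩ := h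
  exact ⟨α, β, γ, hb⟩

lemma harmonic (A B : ℝ) : ∃ β γ : ℝ, ∀ x : ℝ,
    A * Real.cos x + B * Real.sin x = β * Real.cos (x + γ) := by
  by_cases h : (Complex.I * B - A : ℂ) = 0
  · have hA : A = 0 := by
      have := congrArg Complex.re h; simpa using this
    have hB : B = 0 := by
      have := congrArg Complex.im h; simpa using this
    exact ⟨0, 0, fun x => by simp [hA, hB]⟩
  · set z : ℂ := -(Complex.I * B - A) with hz
    have hz0 : z ≠ 0 := neg_ne_zero.mpr h
    have hre : z.re = A := by simp [hz]
    have him : z.im = -B := by simp [hz]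
    refine ⟨‖z‖, z.arg, fun x => ?_⟩
    have hcos : Real.cos z.arg = A / ‖z‖ := by
      rw [Complex.cos_arg hz0, hre]
    have hsin : Real.sin z.arg = -B / ‖z‖ := by
      rw [Complex.sin_arg, him]
    have habs : (‖z‖ : ℝ) ≠ 0 := norm_ne_zero_iff.mpr hz0
    rw [Real.cos_add, mul_sub, ← mul_assoc, ← mul_assoc, mul_comm _ (Real.cos z.arg),
      mul_comm _ (Real.sin z.arg), hcos, hsin]
    field_simp
    ring

lemma sqrt_sum_add_le (L : ℕ) (a b : Fin L → ℝ) :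
    Real.sqrt (∑ l, (a l + b l) ^ 2) ≤
      Real.sqrt (∑ l, a l ^ 2) + Real.sqrt (∑ l, b l ^ 2) := by
  have h := norm_add_le ((WithLp.equiv 2 (Fin L → ℝ)).symm a)
    ((WithLp.equiv 2 (Fin L → ℝ)).symm b)
  rw [EuclideanSpace.norm_eq, EuclideanSpace.norm_eq, EuclideanSpace.norm_eq] at h
  simpa [Real.norm_eq_abs, sq_abs] using h

lemma sqrt_sum_smul (L : ℕ) {c : ℝ} (hc : 0 ≤ c) (a : Fin L → ℝ) :
    Real.sqrt (∑ l, (c * a l) ^ 2) = c * Real.sqrt (∑ l, a l ^ 2) := by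
  have : ∑ l, (c * a l) ^ 2 = c ^ 2 * ∑ l, a l ^ 2 := by
    rw [Finset.mul_sum]; exact Finset.sum_congr rfl fun l _ => by ring
  rw [this, Real.sqrt_mul (sq_nonneg c), Real.sqrt_sq hc]

end Stmt16Aux

open Stmt16Aux in
theorem stmt_16 (L : ℕ) (p q qhat qtil qbar : Fin L → ℝ) (f : ℝ) (N : ℕ)
    (hN : 1 ≤ N)
    (hbar : ∀ l, qbar l = (1 / N) * qhat l + ((N - 1) / N) * qtil l)
    (Lse : ℝ) (hLse : Lse = ∑ l, (qbar l - q l) ^ 2) :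
    (1 / 2) * (chi0 L q - chiF L p q f) ≥
      (1 / 2) * (chi0 L q -
        ((1 / N ^ 2) * chiF L p qhat f +
          ((N - 1) / N) ^ 2 * chiF L p qtil f +
          2 * ((1 / N) * Real.sqrt (chiF L p qhat f) +
            ((N - 1) / N) * Real.sqrt (chiF L p qtil f)) * Real.sqrt Lse +
          (2 * (N - 1) / N ^ 2) *
            Real.sqrt (chiF L p qhat f * chiF L p qtil f)) - Lse) ∧
      chiF L p q f ≤
        (Real.sqrt Lse + (1 / N) * Real.sqrt (chiF L p qhat f) +
          ((N - 1) / N) * Real.sqrt (chiF L p qtil f)) ^ 2 := by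
  have hN0 : (N : ℝ) ≠ 0 := Nat.cast_ne_zero.mpr (by omega)
  have hN1 : (1 : ℝ) ≤ (N : ℝ) := by exact_mod_cast hN
  set c1 : ℝ := 1 / N with hc1def
  set c2 : ℝ := ((N : ℝ) - 1) / N with hc2def
  have hc1 : 0 ≤ c1 := by positivity
  have hc2 : 0 ≤ c2 := by
    apply div_nonneg (by linarith) (by positivity)
  set E1 := chiF L p qhat f with hE1def
  set E2 := chiF L p qtil f with hE2def
  have hE1 : 0 ≤ E1 := chiF_nonneg L p qhat f
  have hE2 : 0 ≤ E2 := chiF_nonneg L p qtil f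
  have hLse0 : 0 ≤ Lse := by rw [hLse]; positivity
  -- key estimate for each ε > 0
  have key : ∀ ε : ℝ, 0 < ε → chiF L p q f ≤
      (Real.sqrt Lse + c1 * Real.sqrt (E1 + ε) + c2 * Real.sqrt (E2 + ε)) ^ 2 := by
    intro ε hε
    obtain ⟨α1, β1, γ1, h1⟩ := chiF_near L p qhat f hε
    obtain ⟨α2, β2, γ2, h2⟩ := chiF_near L p qtil f hε
    set s1 : Fin L → ℝ := fun l => α1 + β1 * Real.cos (f * p l + γ1) with hs1
    set s2 : Fin L → ℝ := fun l => α2 + β2 * Real.cos (f * p l + γ2) with hs2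
    obtain ⟨β, γ, hβγ⟩ := harmonic
      (c1 * (β1 * Real.cos γ1) + c2 * (β2 * Real.cos γ2))
      (-(c1 * (β1 * Real.sin γ1) + c2 * (β2 * Real.sin γ2)))
    have hcomb : ∀ l, c1 * s1 l + c2 * s2 l =
        (c1 * α1 + c2 * α2) + β * Real.cos (f * p l + γ) := by
      intro l
      rw [← hβγ (f * p l)]
      simp only [hs1, hs2]
      rw [Real.cos_add, Real.cos_add]
      ring
    have step1 : chiF L p q f ≤
        ∑ l, (q l - ((c1 * α1 + c2 * α2) + β * Real.cos (f * p l + γ))) ^ 2 :=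
      chiF_le L p q f _ _ _
    set s : Fin L → ℝ := fun l => (c1 * α1 + c2 * α2) + β * Real.cos (f * p l + γ) with hs
    have hdecomp : ∀ l, q l - s l =
        -(qbar l - q l) + (c1 * (qhat l - s1 l) + c2 * (qtil l - s2 l)) := by
      intro l
      rw [show s l = (c1 * α1 + c2 * α2) + β * Real.cos (f * p l + γ) from rfl,
        ← hcomb l, hbar l]
      ring
    have tineq : Real.sqrt (∑ l, (q l - s l) ^ 2) ≤
        Real.sqrt Lse + c1 * Real.sqrt (E1 + ε) + c2 * Real.sqrt (E2 + ε) := by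
      calc Real.sqrt (∑ l, (q l - s l) ^ 2)
          = Real.sqrt (∑ l, (-(qbar l - q l) +
              (c1 * (qhat l - s1 l) + c2 * (qtil l - s2 l))) ^ 2) := by
            congr 1; exact Finset.sum_congr rfl fun l _ => by rw [hdecomp l]
        _ ≤ Real.sqrt (∑ l, (-(qbar l - q l)) ^ 2) +
              Real.sqrt (∑ l, (c1 * (qhat l - s1 l) + c2 * (qtil l - s2 l)) ^ 2) :=
            sqrt_sum_add_le L _ _
        _ ≤ Real.sqrt (∑ l, (-(qbar l - q l)) ^ 2) +
              (Real.sqrt (∑ l, (c1 * (qhat l - s1 l)) ^ 2) +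
               Real.sqrt (∑ l, (c2 * (qtil l - s2 l)) ^ 2)) := by
            gcongr
            exact sqrt_sum_add_le L _ _
        _ = Real.sqrt Lse + (c1 * Real.sqrt (∑ l, (qhat l - s1 l) ^ 2) +
              c2 * Real.sqrt (∑ l, (qtil l - s2 l) ^ 2)) := by
            rw [sqrt_sum_smul L hc1, sqrt_sum_smul L hc2]
            have hL : ∑ l, (-(qbar l - q l)) ^ 2 = Lse := by
              rw [hLse]; exact Finset.sum_congr rfl fun l _ => by ring
            rw [hL]
        _ ≤ Real.sqrt Lse + (c1 * Real.sqrt (E1 + ε) + c2 * Real.sqrt (E2 + ε)) := by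
            have b1 : Real.sqrt (∑ l, (qhat l - s1 l) ^ 2) ≤ Real.sqrt (E1 + ε) :=
              Real.sqrt_le_sqrt h1.le
            have b2 : Real.sqrt (∑ l, (qtil l - s2 l) ^ 2) ≤ Real.sqrt (E2 + ε) :=
              Real.sqrt_le_sqrt h2.le
            exact add_le_add_right (add_le_add (mul_le_mul_of_nonneg_left b1 hc1)
              (mul_le_mul_of_nonneg_left b2 hc2)) _
        _ = Real.sqrt Lse + c1 * Real.sqrt (E1 + ε) + c2 * Real.sqrt (E2 + ε) := by ring
    have hsum0 : 0 ≤ ∑ l, (q l - s l) ^ 2 := by positivity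
    calc chiF L p q f ≤ ∑ l, (q l - s l) ^ 2 := step1
      _ = Real.sqrt (∑ l, (q l - s l) ^ 2) ^ 2 := (Real.sq_sqrt hsum0).symm
      _ ≤ (Real.sqrt Lse + c1 * Real.sqrt (E1 + ε) + c2 * Real.sqrt (E2 + ε)) ^ 2 := by
          apply pow_le_pow_left₀ (Real.sqrt_nonneg _) tineq
  -- pass to the limit ε → 0⁺
  have hmain : chiF L p q f ≤
      (Real.sqrt Lse + c1 * Real.sqrt E1 + c2 * Real.sqrt E2) ^ 2 := by
    have hcont : Filter.Tendsto
        (fun ε : ℝ => (Real.sqrt Lse + c1 * Real.sqrt (E1 + ε) +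
          c2 * Real.sqrt (E2 + ε)) ^ 2) (nhdsWithin 0 (Set.Ioi 0))
        (nhds ((Real.sqrt Lse + c1 * Real.sqrt E1 + c2 * Real.sqrt E2) ^ 2)) := by
      have hc : Continuous (fun ε : ℝ => (Real.sqrt Lse + c1 * Real.sqrt (E1 + ε) +
          c2 * Real.sqrt (E2 + ε)) ^ 2) := by
        apply Continuous.pow
        exact (continuous_const.add (continuous_const.mul
          (Real.continuous_sqrt.comp (continuous_const.add continuous_id)))).add
          (continuous_const.mul
            (Real.continuous_sqrt.comp (continuous_const.add continuous_id)))
      have h := (hc.tendsto 0).mono_left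
        (nhdsWithin_le_nhds : nhdsWithin (0:ℝ) (Set.Ioi 0) ≤ nhds 0)
      simpa using h
    refine ge_of_tendsto hcont ?_
    exact Filter.eventually_of_mem self_mem_nhdsWithin fun ε hε => key ε hε
  refine ⟨?_, hmain⟩
  have e1 : Real.sqrt E1 ^ 2 = E1 := Real.sq_sqrt hE1
  have e2 : Real.sqrt E2 ^ 2 = E2 := Real.sq_sqrt hE2
  have eL : Real.sqrt Lse ^ 2 = Lse := Real.sq_sqrt hLse0
  have emul : Real.sqrt (E1 * E2) = Real.sqrt E1 * Real.sqrt E2 := Real.sqrt_mul hE1 E2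
  have hEq : (1 / (N : ℝ) ^ 2) * E1 + c2 ^ 2 * E2 +
      2 * (c1 * Real.sqrt E1 + c2 * Real.sqrt E2) * Real.sqrt Lse +
      (2 * ((N : ℝ) - 1) / N ^ 2) * Real.sqrt (E1 * E2) + Lse =
      (Real.sqrt Lse + c1 * Real.sqrt E1 + c2 * Real.sqrt E2) ^ 2 := by
    rw [emul, hc1def, hc2def]
    set x := Real.sqrt E1 with hx
    set y := Real.sqrt E2 with hy
    set z := Real.sqrt Lse with hz
    rw [← e1, ← e2, ← eL]
    field_simp
    ring
  linarith [hmain, hEq]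
end

section
/- Let D be the student data set with values q_l, D̄ the ensemble data set with values q̄_l at the same sample points, L_se = ∑_l (q̄_l - q_l)², and suppose χ²_f(D̄) ≥ L_se. Then P_D(f) ≤ (1/2)[χ²_0(D) - (√(χ²_f(D̄)) - √(L_se))²], where P_D(f) = (1/2)[χ²_0(D) - χ²_f(D)]. -/
lemma sqrt_triangle (L : ℕ) (a b : Fin L → ℝ) :
    Real.sqrt (∑ l, (a l + b l) ^ 2) ≤
      Real.sqrt (∑ l, (a l) ^ 2) + Real.sqrt (∑ l, (b l) ^ 2) := by
  let x : EuclideanSpace ℝ (Fin L) := WithLp.toLp 2 a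
  let y : EuclideanSpace ℝ (Fin L) := WithLp.toLp 2 b
  have hx : ‖x‖ = Real.sqrt (∑ l, (a l) ^ 2) := by
    rw [EuclideanSpace.norm_eq]
    simp [x, y, Real.norm_eq_abs, sq_abs]
  have hy : ‖y‖ = Real.sqrt (∑ l, (b l) ^ 2) := by
    rw [EuclideanSpace.norm_eq]
    simp [x, y, Real.norm_eq_abs, sq_abs]
  have hxy : ‖x + y‖ = Real.sqrt (∑ l, (a l + b l) ^ 2) := by
    rw [EuclideanSpace.norm_eq]
    simp [x, y, Real.norm_eq_abs, sq_abs]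
  calc Real.sqrt (∑ l, (a l + b l) ^ 2) = ‖x + y‖ := hxy.symm
    _ ≤ ‖x‖ + ‖y‖ := norm_add_le x y
    _ = _ := by rw [hx, hy]

theorem stmt_17 (L : ℕ) (p q qbar : Fin L → ℝ) (f : ℝ)
    (Lse : ℝ) (hLse : Lse = ∑ l, (qbar l - q l) ^ 2)
    (h : chiF L p qbar f ≥ Lse) :
    (1 / 2) * (chi0 L q - chiF L p q f) ≤
      (1 / 2) * (chi0 L q -
        (Real.sqrt (chiF L p qbar f) - Real.sqrt Lse) ^ 2) := by
  have key : (Real.sqrt (chiF L p qbar f) - Real.sqrt Lse) ^ 2 ≤ chiF L p q f := by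
    have hbdd : BddBelow {e : ℝ | ∃ α β γ : ℝ,
        e = ∑ l, (qbar l - (α + β * Real.cos (f * p l + γ))) ^ 2} := by
      refine ⟨0, ?_⟩
      rintro e ⟨α, β, γ, rfl⟩
      positivity
    apply le_csInf
    · exact ⟨∑ l, (q l - (0 + 0 * Real.cos (f * p l + 0))) ^ 2, 0, 0, 0, rfl⟩
    rintro e ⟨α, β, γ, rfl⟩
    set s : Fin L → ℝ := fun l => α + β * Real.cos (f * p l + γ) with hs
    have h1 : chiF L p qbar f ≤ ∑ l, (qbar l - s l) ^ 2 :=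
      csInf_le hbdd ⟨α, β, γ, rfl⟩
    have htri : Real.sqrt (∑ l, (qbar l - s l) ^ 2) ≤
        Real.sqrt (∑ l, (q l - s l) ^ 2) + Real.sqrt Lse := by
      have := sqrt_triangle L (fun l => q l - s l) (fun l => qbar l - q l)
      simp only [hLse]
      convert this using 3 with l
      ring
    have h2 : Real.sqrt (chiF L p qbar f) - Real.sqrt Lse ≤
        Real.sqrt (∑ l, (q l - s l) ^ 2) := by
      have := Real.sqrt_le_sqrt h1
      linarith
    have h3 : 0 ≤ Real.sqrt (chiF L p qbar f) - Real.sqrt Lse := by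
      have := Real.sqrt_le_sqrt h
      linarith
    calc (Real.sqrt (chiF L p qbar f) - Real.sqrt Lse) ^ 2
        ≤ Real.sqrt (∑ l, (q l - s l) ^ 2) ^ 2 := by
          apply pow_le_pow_left₀ h3 h2
      _ = ∑ l, (q l - s l) ^ 2 := Real.sq_sqrt (by positivity)
  linarith
end
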